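/- arXiv:2212.10868 — 3 statements merged into one kernel-verified Lean document; each statement's English description precedes it below -/
import Mathlib

section
/- For every nonnegative integer k and every x ∈ ℍ with Im(x) ≠ 0, the power function f(x) = xᵏ satisfies θ̄(xᵏ) = 0 and θ(xᵏ) = k·x^{k-1}, where θ and θ̄ are the global operators θ = ½(∂/∂x₀ + (Im x)⁻¹ Σᵢ₌₁³ xᵢ ∂/∂xᵢ), θ̄ = ½(∂/∂x₀ - (Im x)⁻¹ Σᵢ₌₁³ xᵢ ∂/∂xᵢ). -/
def qi : Quaternion ℝ := ⟨0, 1, 0, 0⟩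
def qj : Quaternion ℝ := ⟨0, 0, 1, 0⟩
def qk : Quaternion ℝ := ⟨0, 0, 0, 1⟩

/-- The global operator `θ = ½(∂/∂x₀ + (Im x)⁻¹ Σᵢ xᵢ ∂/∂xᵢ)`. -/
noncomputable def theta (f : Quaternion ℝ → Quaternion ℝ) (x : Quaternion ℝ) : Quaternion ℝ :=
  (1 / 2 : ℝ) • (fderiv ℝ f x 1 +
    (x.im)⁻¹ * (x.imI • fderiv ℝ f x qi + x.imJ • fderiv ℝ f x qj + x.imK • fderiv ℝ f x qk))

/-- The global operator `θ̄ = ½(∂/∂x₀ - (Im x)⁻¹ Σᵢ xᵢ ∂/∂xᵢ)`. -/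
noncomputable def thetaBar (f : Quaternion ℝ → Quaternion ℝ) (x : Quaternion ℝ) : Quaternion ℝ :=
  (1 / 2 : ℝ) • (fderiv ℝ f x 1 -
    (x.im)⁻¹ * (x.imI • fderiv ℝ f x qi + x.imJ • fderiv ℝ f x qj + x.imK • fderiv ℝ f x qk))

/-!
Since `Σᵢ xᵢ ∂/∂xᵢ` is the derivative in the direction `Im x`, both `θ` and `θ̄` only involve
derivatives of `y ↦ yᵏ` at `x` in the directions `1` and `Im x`. These commute with `x`, and in a
direction `c` commuting with `x` the noncommutative product rule collapses to `k c xᵏ⁻¹`.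
-/

theorem fderiv_pow_apply_of_commute {𝕜 𝔸 : Type*} [NontriviallyNormedField 𝕜] [NormedRing 𝔸]
    [NormedAlgebra 𝕜 𝔸] {x c : 𝔸} (h : Commute x c) (n : ℕ) :
    fderiv 𝕜 (fun y : 𝔸 => y ^ n) x c = n • (c * x ^ (n - 1)) := by
  have hterm : ∀ i ∈ Finset.range n, x ^ (n - 1 - i) * c * x ^ i = c * x ^ (n - 1) := by
    intro i hi
    rw [(h.pow_left _).eq, mul_assoc, ← pow_add,
      Nat.sub_add_cancel (Nat.le_sub_one_of_lt (Finset.mem_range.mp hi))]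
  simp only [fderiv_pow_ring', MulOpposite.op_pow, Nat.pred_eq_sub_one, sum_apply, smul_apply,
    ContinuousLinearMap.id_apply, smul_eq_mul, MulOpposite.smul_eq_mul_unop, MulOpposite.unop_pow,
    MulOpposite.unop_op]
  rw [Finset.sum_congr rfl hterm, Finset.sum_const, Finset.card_range]

namespace Quaternion

theorem im_eq_sum_smul (x : Quaternion ℝ) : x.im = x.imI • qi + x.imJ • qj + x.imK • qk := by
  ext <;> simp <;> simp [qi, qj, qk]

theorem commute_self_im (x : Quaternion ℝ) : Commute x x.im := by
  conv_lhs => rw [← x.re_add_im]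
  exact (coe_commute _ _).add_left (Commute.refl _)

end Quaternion

theorem theta_eq (f : Quaternion ℝ → Quaternion ℝ) (x : Quaternion ℝ) :
    theta f x = (1 / 2 : ℝ) • (fderiv ℝ f x 1 + x.im⁻¹ * fderiv ℝ f x x.im) := by
  simp only [theta, x.im_eq_sum_smul, map_add, map_smul]

theorem thetaBar_eq (f : Quaternion ℝ → Quaternion ℝ) (x : Quaternion ℝ) :
    thetaBar f x = (1 / 2 : ℝ) • (fderiv ℝ f x 1 - x.im⁻¹ * fderiv ℝ f x x.im) := by
  simp only [thetaBar, x.im_eq_sum_smul, map_add, map_smul]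

/-- `θ̄(xᵏ) = 0` and `θ(xᵏ) = k x^(k-1)` for every `k ∈ ℕ` and every non-real `x`. -/
theorem theta_pow (k : ℕ) (x : Quaternion ℝ) (hx : x.im ≠ 0) :
    thetaBar (fun y => y ^ k) x = 0 ∧
    theta (fun y => y ^ k) x = (k : Quaternion ℝ) * x ^ (k - 1) := by
  have h_one := fderiv_pow_apply_of_commute (𝕜 := ℝ) (Commute.one_right x) k
  have h_im : x.im⁻¹ * fderiv ℝ (fun y => y ^ k) x x.im = k • x ^ (k - 1) := by
    rw [fderiv_pow_apply_of_commute x.commute_self_im, mul_smul_comm, inv_mul_cancel_left₀ hx]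
  rw [theta_eq, thetaBar_eq, h_one, h_im, one_mul, sub_self, smul_zero, ← two_smul ℝ, smul_smul,
    nsmul_eq_mul]
  norm_num
end

section
/- The global operator θ̄_{x₂} = ½(∂/∂x_{2,0} - (Im x₂)⁻¹ Σᵢ₌₁³ x_{2,i} ∂/∂x_{2,i}) does not vanish on the slice-regular function f(x₁,x₂) = x₁x₂: explicitly, θ_{x₂}(x₁x₂)(x₁,x₂) = x_{1,0} + (Im x₂)/|Im x₂|² · Σᵢ₌₁³ x_{1,i} x_{2,i} for x₂ ∉ ℝ, and in particular θ_{x₂}(x₁x₂) restricted to ℂ_i × ℂ_i equals x₁. -/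
/-! The derivative of `y ↦ x₁ * y` is `v ↦ x₁ * v`, so `θ` turns it into the average of `x₁` and
its conjugate `(Im x₂)⁻¹ x₁ (Im x₂)`. Conjugation by a nonzero purely imaginary `u` fixes the real
part and the component of `Im x₁` along `u`, and negates the component orthogonal to `u`; the
average is therefore `Re x₁` plus the projection of `Im x₁` onto `u`. On `ℂ_i × ℂ_i` the factors
commute, so the conjugate, and with it the average, is `x₁` itself. -/

open Quaternion

lemma Quaternion.commute_of_imJ_eq_zero_of_imK_eq_zero {R : Type*} [CommRing R] {a b : ℍ[R]}
    (haJ : a.imJ = 0) (haK : a.imK = 0) (hbJ : b.imJ = 0) (hbK : b.imK = 0) : Commute a b := by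
  ext <;> simp [haJ, haK, hbJ, hbK, mul_comm, add_comm]

lemma im_eq_imI_smul_qi_add_imJ_smul_qj_add_imK_smul_qk (x : Quaternion ℝ) :
    x.im = x.imI • qi + x.imJ • qj + x.imK • qk := by
  ext <;>
    simp only [re_im, imI_im, imJ_im, imK_im, re_add, imI_add, imJ_add, imK_add, re_smul, imI_smul,
      imJ_smul, imK_smul] <;>
    simp [qi, qj, qk]

lemma theta_continuousLinearMap (L : Quaternion ℝ →L[ℝ] Quaternion ℝ) (x : Quaternion ℝ) :
    theta L x = (1 / 2 : ℝ) • (L 1 + x.im⁻¹ * L x.im) := by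
  simp only [theta, L.fderiv, im_eq_imI_smul_qi_add_imJ_smul_qj_add_imK_smul_qk x, map_add,
    map_smul]

lemma theta_const_mul (a x : Quaternion ℝ) :
    theta (a * ·) x = (1 / 2 : ℝ) • (a + x.im⁻¹ * a * x.im) :=
  (theta_continuousLinearMap (ContinuousLinearMap.mul ℝ _ a) x).trans (by simp [mul_assoc])

lemma theta_const_mul_of_commute {a x : Quaternion ℝ} (hx : x.im ≠ 0) (h : Commute a x.im) :
    theta (a * ·) x = a := by
  rw [theta_const_mul, mul_assoc, h.eq, ← mul_assoc, inv_mul_cancel₀ hx, one_mul, ← two_smul ℝ a,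
    smul_smul]
  norm_num

lemma half_smul_add_inv_im_mul_mul_im (q x : Quaternion ℝ) (hx : x.im ≠ 0) :
    (1 / 2 : ℝ) • (q + x.im⁻¹ * q * x.im) = (q.re : Quaternion ℝ) + (‖x.im‖ ^ 2)⁻¹ •
        (x.im * ((q.imI * x.imI + q.imJ * x.imJ + q.imK * x.imK : ℝ) : Quaternion ℝ)) := by
  have hnorm : ‖x.im‖ ^ 2 = x.imI ^ 2 + x.imJ ^ 2 + x.imK ^ 2 := by
    rw [sq, ← normSq_eq_norm_mul_self, normSq_def']
    simp
  have hnorm_ne : x.imI ^ 2 + x.imJ ^ 2 + x.imK ^ 2 ≠ 0 := by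
    rw [← hnorm]
    positivity
  rw [inv_def, normSq_eq_norm_mul_self, ← sq, hnorm]
  ext <;> simp [field] <;> ring

/-- `θ_{x₂}(x₁x₂) = x_{1,0} + (Im x₂)/|Im x₂|² · Σᵢ x_{1,i} x_{2,i}`; in particular on
`ℂ_i × ℂ_i` it equals `x₁` (and is not a slice function). -/
theorem theta_x2_of_x1_mul_x2 (x₁ x₂ : Quaternion ℝ) (hx₂ : x₂.im ≠ 0) :
    theta (fun y => x₁ * y) x₂ =
      (x₁.re : Quaternion ℝ) + (‖x₂.im‖ ^ 2)⁻¹ •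
        (x₂.im * ((x₁.imI * x₂.imI + x₁.imJ * x₂.imJ + x₁.imK * x₂.imK : ℝ) : Quaternion ℝ)) ∧
    (x₁.imJ = 0 → x₁.imK = 0 → x₂.imJ = 0 → x₂.imK = 0 →
      theta (fun y => x₁ * y) x₂ = x₁) := by
  refine ⟨by rw [theta_const_mul, half_smul_add_inv_im_mul_mul_im x₁ x₂ hx₂],
    fun h₁J h₁K h₂J h₂K => theta_const_mul_of_commute hx₂ ?_⟩
  exact commute_of_imJ_eq_zero_of_imK_eq_zero h₁J h₁K (by simpa using h₂J) (by simpa using h₂K)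
end

section
/- Representation (interpolation) formula for slice functions in one variable, pointwise form: let α, β ∈ ℝ with β ≠ 0, and let J, K ∈ S = {q ∈ ℍ : q² = -1} with J ≠ K. If a function f satisfies f(α + Lβ) = F₁ + L·F₂ for all L ∈ S with fixed F₁, F₂ ∈ ℍ, then for every I ∈ S, f(α + Iβ) = (I - K)(J - K)⁻¹ f(α + Jβ) - (I - J)(J - K)⁻¹ f(α + Kβ). -/
/-- Representation (interpolation) formula for slice functions in one variable,
pointwise form. -/
theorem slice_representation_formula (α β : ℝ) (hβ : β ≠ 0)
    (J K : Quaternion ℝ) (hJ : J ^ 2 = -1) (hK : K ^ 2 = -1) (hJK : J ≠ K)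
    (f : Quaternion ℝ → Quaternion ℝ) (F₁ F₂ : Quaternion ℝ)
    (hf : ∀ L : Quaternion ℝ, L ^ 2 = -1 →
      f ((α : Quaternion ℝ) + L * (β : Quaternion ℝ)) = F₁ + L * F₂) :
    ∀ I : Quaternion ℝ, I ^ 2 = -1 →
      f ((α : Quaternion ℝ) + I * (β : Quaternion ℝ)) =
        (I - K) * (J - K)⁻¹ * f ((α : Quaternion ℝ) + J * (β : Quaternion ℝ)) -
        (I - J) * (J - K)⁻¹ * f ((α : Quaternion ℝ) + K * (β : Quaternion ℝ)) := by
  intro I hI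
  have hne : J - K ≠ 0 := sub_ne_zero.mpr hJK
  rw [hf I hI, hf J hJ, hf K hK]
  set A := (J - K)⁻¹ with hA
  have h1 : A * (J - K) = 1 := inv_mul_cancel₀ hne
  have h2 : (J - K) * A = 1 := mul_inv_cancel₀ hne
  have hJJ : J * J = -1 := by rw [← sq, hJ]
  have hKK : K * K = -1 := by rw [← sq, hK]
  have hkey : J * (J - K) = -((J - K) * K) := by
    rw [mul_sub, sub_mul, hJJ, hKK]; noncomm_ring
  have hkey2 : (J - K) * J = -(K * (J - K)) := by
    rw [sub_mul, mul_sub, hJJ, hKK]; noncomm_ring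
  have hAJ : A * J = -(K * A) := by
    calc A * J = A * J * ((J - K) * A) := by rw [h2, mul_one]
      _ = A * (J * (J - K)) * A := by noncomm_ring
      _ = A * (-((J - K) * K)) * A := by rw [hkey]
      _ = -((A * (J - K)) * (K * A)) := by noncomm_ring
      _ = -(K * A) := by rw [h1, one_mul]
  have hAK : A * K = -(J * A) := by
    have hJA : J * A = -(A * K) := by
      calc J * A = (A * (J - K)) * (J * A) := by rw [h1, one_mul]
        _ = A * ((J - K) * J) * A := by noncomm_ring
        _ = A * (-(K * (J - K))) * A := by rw [hkey2]
        _ = -((A * K) * ((J - K) * A)) := by noncomm_ring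
        _ = -(A * K) := by rw [h2, mul_one]
    rw [hJA, neg_neg]
  have expand : (I - K) * A * (F₁ + J * F₂) - (I - J) * A * (F₁ + K * F₂)
      = ((J - K) * A) * F₁ + ((I - K) * (A * J) - (I - J) * (A * K)) * F₂ := by
    noncomm_ring
  rw [expand, h2, hAJ, hAK, one_mul]
  have coeff : (I - K) * -(K * A) - (I - J) * -(J * A)
      = I * ((J - K) * A) + (K * K) * A - (J * J) * A := by noncomm_ring
  rw [coeff, hJJ, hKK, h2, mul_one]
  noncomm_ring
end
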